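/- arXiv:1903.09444 — 2 statements merged into one kernel-verified Lean document; each statement's English description precedes it below -/
import Mathlib

section
/- If a perfect 2-coloring of Ci_∞(D_n) has positive outer degrees b, c with b + c = 2n, then its parameter matrix has equal rows, i.e., every vertex has exactly b neighbors of color white and 2n - b neighbors of color black, regardless of its own color. -/
/-- Neighborhood of `i` in the infinite circulant graph `Ci_∞(D_n)`,
`D_n = {±1, ±3, …, ±(2n-1)}`: the integers at odd distance less than `2n` from `i`. -/
noncomputable def nbrs (n : ℕ) (i : ℤ) : Finset ℤ :=
  (Finset.Icc (i - (2*(n:ℤ) - 1)) (i + (2*(n:ℤ) - 1))).filter (fun j => Odd (j - i))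

/-- `φ` is a perfect 2-coloring of `Ci_∞(D_n)` with outer degrees `(b, c)`:
every vertex of color 0 (black) has exactly `b` neighbors of color 1 (white), and
every vertex of color 1 has exactly `c` neighbors of color 0. -/
def Perfect2 (n : ℕ) (φ : ℤ → Fin 2) (b c : ℕ) : Prop :=
  (∀ i, φ i = 0 → ((nbrs n i).filter (fun j => φ j = 1)).card = b) ∧
  (∀ i, φ i = 1 → ((nbrs n i).filter (fun j => φ j = 0)).card = c)

/-!
Every vertex of `Ci_∞(D_n)` has exactly `2n` neighbors. A black vertex has `b` white neighbors by
definition; a white vertex has `c` black neighbors, hence `2n - c = b` white ones. So both colors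
see `b` white and `2n - b` black neighbors.
-/

lemma card_nbrs (n : ℕ) (i : ℤ) : (nbrs n i).card = 2 * n := by
  have h : nbrs n i =
      (Finset.range (2 * n)).image (fun k : ℕ => i - (2 * (n : ℤ) - 1) + 2 * k) := by
    ext j
    simp only [nbrs, Finset.mem_filter, Finset.mem_Icc, Finset.mem_image, Finset.mem_range,
      Int.odd_iff]
    constructor
    · rintro ⟨⟨hlo, hhi⟩, hodd⟩
      exact ⟨((j - (i - (2 * (n : ℤ) - 1))) / 2).toNat, by omega, by omega⟩
    · rintro ⟨k, hk, rfl⟩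
      omega
  rw [h, Finset.card_image_of_injective _ (fun _ _ _ => by omega), Finset.card_range]

lemma card_filter_eq_one_add_card_filter_eq_zero {α : Type*} (s : Finset α) (f : α → Fin 2) :
    (s.filter (f · = 1)).card + (s.filter (f · = 0)).card = s.card := by
  have h : s.filter (f · = 0) = s.filter (¬ f · = 1) :=
    Finset.filter_congr fun j _ => by omega
  rw [h, Finset.card_filter_add_card_filter_not]

theorem sum_eq_two_n_equal_rows_general (n b c : ℕ)
    (hbc : b + c = 2*n)
    (φ : ℤ → Fin 2) (hφ : Perfect2 n φ b c) :
    ∀ i : ℤ, ((nbrs n i).filter (fun j => φ j = 1)).card = b ∧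
      ((nbrs n i).filter (fun j => φ j = 0)).card = 2*n - b := by
  intro i
  have hsplit := card_filter_eq_one_add_card_filter_eq_zero (nbrs n i) φ
  rw [card_nbrs] at hsplit
  obtain h | h : φ i = 0 ∨ φ i = 1 := by omega
  · have := hφ.1 i h
    omega
  · have := hφ.2 i h
    omega

/-- If `b + c = 2n`, every vertex has exactly `b` white and `2n - b` black
neighbors, regardless of its own color. -/
theorem sum_eq_two_n_equal_rows (n b c : ℕ) (hn : 0 < n) (hb : 0 < b) (hc : 0 < c)
    (hbc : b + c = 2*n)
    (φ : ℤ → Fin 2) (hφ : Perfect2 n φ b c) :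
    ∀ i : ℤ, ((nbrs n i).filter (fun j => φ j = 1)).card = b ∧
      ((nbrs n i).filter (fun j => φ j = 0)).card = 2*n - b :=
  sum_eq_two_n_equal_rows_general n b c hbc φ hφ
end

section
/- For any positive integers n, k, every perfect k-coloring φ of the infinite path graph (vertex set ℤ, i ~ i±1) with period [1 2 3 ⋯ k] (i.e., φ(i) = (i mod k) + 1) is also a perfect coloring of the infinite circulant graph Ci_∞(D_n) when k = 2n+1, with the induced parameter matrix. -/
/-!
The neighbours of `i` are `i + d` for the odd `d` with `|d| < 2n`. Modulo `2n + 1` the positive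
offsets `1, 3, …, 2n - 1` and the shifted negative ones `d + 2n + 1 = 2, 4, …, 2n` together hit every
nonzero residue exactly once, so each residue class other than that of `i` contains exactly one
neighbour of `i`: the parameter matrix is `J - I`.
-/

lemma mem_nbrs {n : ℕ} {i x : ℤ} : x ∈ nbrs n i ↔ |x - i| < 2 * n ∧ Odd (x - i) := by
  rw [nbrs, Finset.mem_filter, Finset.mem_Icc, abs_lt]
  constructor <;> rintro ⟨⟨h₁, h₂⟩, h⟩ <;> exact ⟨⟨by omega, by omega⟩, h⟩

lemma Int.eq_of_intCast_eq_of_even_sub {k : ℕ} (hk : Odd k) {x y : ℤ}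
    (hcast : (x : ZMod k) = y) (heven : Even (x - y)) (hlt : |x - y| < 2 * k) : x = y := by
  have hk_dvd : (k : ℤ) ∣ x - y := (ZMod.intCast_eq_intCast_iff_dvd_sub y x k).mp hcast.symm
  have hcop : IsCoprime (2 : ℤ) k := by
    rw [Int.isCoprime_iff_gcd_eq_one]
    exact_mod_cast (Nat.coprime_two_left.mpr hk)
  have h2k_dvd : 2 * (k : ℤ) ∣ x - y := hcop.mul_dvd (even_iff_two_dvd.mp heven) hk_dvd
  exact sub_eq_zero.mp (Int.eq_zero_of_abs_lt_dvd h2k_dvd hlt)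

lemma intCast_ne_of_mem_nbrs {n : ℕ} {i x : ℤ} (hx : x ∈ nbrs n i) :
    (x : ZMod (2 * n + 1)) ≠ i := by
  obtain ⟨hlt, hodd⟩ := mem_nbrs.mp hx
  intro hcast
  have hdvd : ((2 * n + 1 : ℕ) : ℤ) ∣ x - i :=
    (ZMod.intCast_eq_intCast_iff_dvd_sub i x _).mp hcast.symm
  have hxi : x - i = 0 := Int.eq_zero_of_abs_lt_dvd hdvd (by push_cast; omega)
  rw [hxi] at hodd
  exact Int.not_odd_zero hodd

lemma intCast_injOn_nbrs (n : ℕ) (i : ℤ) :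
    Set.InjOn (fun x : ℤ => (x : ZMod (2 * n + 1))) (nbrs n i) := by
  intro x hx y hy hcast
  obtain ⟨hx_lt, hx_odd⟩ := mem_nbrs.mp hx
  obtain ⟨hy_lt, hy_odd⟩ := mem_nbrs.mp hy
  have heven : Even (x - y) := by simpa using hx_odd.sub_odd hy_odd
  refine Int.eq_of_intCast_eq_of_even_sub (odd_two_mul_add_one n) hcast heven ?_
  rw [abs_lt] at hx_lt hy_lt ⊢
  push_cast
  omega

/-- The residue `r ∈ [1, 2n]` of `j - i` is realised by the offset `r` if `r` is odd and by
`r - (2n + 1)` if `r` is even. -/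
lemma exists_mem_nbrs_intCast_eq {n : ℕ} {i : ℤ} {j : ZMod (2 * n + 1)}
    (hj : j ≠ (i : ZMod (2 * n + 1))) : ∃ x ∈ nbrs n i, (x : ZMod (2 * n + 1)) = j := by
  set r := (j - i).val with hr
  have hr_lt : r < 2 * n + 1 := ZMod.val_lt _
  have hr_pos : r ≠ 0 := by
    rw [hr, Ne, ZMod.val_eq_zero, sub_eq_zero]
    exact hj
  have hr_cast : (r : ZMod (2 * n + 1)) = j - i := ZMod.natCast_zmod_val _
  have hmod : ((2 * n + 1 : ℕ) : ZMod (2 * n + 1)) = 0 := ZMod.natCast_self _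
  rcases Nat.even_or_odd r with ⟨m, hm⟩ | ⟨m, hm⟩
  · refine ⟨i + r - (2 * n + 1), mem_nbrs.mpr ⟨?_, ⟨(m : ℤ) - n - 1, ?_⟩⟩, ?_⟩
    · rw [abs_lt]; omega
    · omega
    · push_cast at hmod ⊢
      rw [hr_cast, hmod]
      ring
  · refine ⟨i + r, mem_nbrs.mpr ⟨?_, ⟨m, ?_⟩⟩, ?_⟩
    · rw [abs_lt]; omega
    · omega
    · push_cast
      rw [hr_cast]
      ring

lemma card_filter_nbrs_intCast_eq (n : ℕ) (i : ℤ) (j : ZMod (2 * n + 1)) :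
    ((nbrs n i).filter (fun x : ℤ => (x : ZMod (2 * n + 1)) = j)).card
      = if j = (i : ZMod (2 * n + 1)) then 0 else 1 := by
  split_ifs with hj
  · rw [Finset.card_eq_zero, Finset.filter_eq_empty_iff]
    intro x hx
    rw [hj]
    exact intCast_ne_of_mem_nbrs hx
  · have hle : ((nbrs n i).filter (fun x : ℤ => (x : ZMod (2 * n + 1)) = j)).card ≤ 1 := by
      rw [Finset.card_le_one]
      intro x hx y hy
      rw [Finset.mem_filter] at hx hy
      exact intCast_injOn_nbrs n i hx.1 hy.1 (hx.2.trans hy.2.symm)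
    have hpos : 0 < ((nbrs n i).filter (fun x : ℤ => (x : ZMod (2 * n + 1)) = j)).card := by
      obtain ⟨x, hx, hxj⟩ := exists_mem_nbrs_intCast_eq hj
      exact Finset.card_pos.mpr ⟨x, Finset.mem_filter.mpr ⟨hx, hxj⟩⟩
    omega

theorem cyclic_coloring_perfect_general (n : ℕ) :
    ∃ M : ZMod (2*n + 1) → ZMod (2*n + 1) → ℕ,
      ∀ (i : ℤ) (j : ZMod (2*n + 1)),
        ((nbrs n i).filter (fun x : ℤ => ((x : ZMod (2*n + 1)) = j))).card
          = M (i : ZMod (2*n + 1)) j :=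
  ⟨fun a b => if b = a then 0 else 1, card_filter_nbrs_intCast_eq n⟩

/-- The coloring of `ℤ` by residues mod `2n+1` (period `[1 2 ⋯ (2n+1)]`),
which is a perfect coloring of the infinite path graph, is also a perfect
`(2n+1)`-coloring of `Ci_∞(D_n)` with the induced parameter matrix. -/
theorem cyclic_coloring_perfect (n : ℕ) (hn : 0 < n) :
    ∃ M : ZMod (2*n + 1) → ZMod (2*n + 1) → ℕ,
      ∀ (i : ℤ) (j : ZMod (2*n + 1)),
        ((nbrs n i).filter (fun x : ℤ => ((x : ZMod (2*n + 1)) = j))).card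
          = M (i : ZMod (2*n + 1)) j :=
  cyclic_coloring_perfect_general n
end
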